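/- Let z, y ∈ ℂ satisfy y² = z(z+α²)(z+β²) with y ≠ 0, and set F = (1/2)·I₂ + (2y)⁻¹·[[(α−β)z, α(z+1)], [βz(z+1), −(α−β)z]]. Then: (i) F² = F (F is idempotent); (ii) M(z)·F = F·M(z) = ((α+β)z + y)·F and M(z)·(I₂ − F) = ((α+β)z − y)·(I₂ − F); (iii) consequently, for z ≠ 1, A(z)·F = F·A(z) = ((α+β)z + y)(z−1)⁻¹·F and A(z)·(I₂ − F) = ((α+β)z − y)(z−1)⁻¹·(I₂ − F). -/

import Mathlib

open Matrix

/-- The matrix `M(z) = [[2αz, α(z+1)], [βz(z+1), 2βz]]`. -/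
noncomputable def symbM (α β : ℝ) (z : ℂ) : Matrix (Fin 2) (Fin 2) ℂ :=
  !![2 * (α : ℂ) * z, (α : ℂ) * (z + 1);
     (β : ℂ) * z * (z + 1), 2 * (β : ℂ) * z]

/-- The matrix symbol `A(z) = (z-1)⁻¹ M(z)`. -/
noncomputable def symbA (α β : ℝ) (z : ℂ) : Matrix (Fin 2) (Fin 2) ℂ :=
  (z - 1)⁻¹ • symbM α β z

/-- The spectral projection
`F = ½ I₂ + (2y)⁻¹ [[(α-β)z, α(z+1)], [βz(z+1), -(α-β)z]]`. -/
noncomputable def projF (α β : ℝ) (z y : ℂ) : Matrix (Fin 2) (Fin 2) ℂ :=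
  (2 : ℂ)⁻¹ • (1 : Matrix (Fin 2) (Fin 2) ℂ) +
    (2 * y)⁻¹ • !![((α : ℂ) - (β : ℂ)) * z, (α : ℂ) * (z + 1);
                   (β : ℂ) * z * (z + 1), -(((α : ℂ) - (β : ℂ)) * z)]

/-!
If `N² = y²` with `y` invertible, then `F = ½ + N/(2y)` is the spectral projection of `N`
onto the eigenvalue `y`: `N F = y F`, hence `F² = F`, and `N (1 - F) = -y (1 - F)`.
Here `M(z) = (α+β)z + N` with `N` the trace-free part of `M(z)`, and `αβ = 1` makes
`N² = z(z+α²)(z+β²) = y²`; the statements about `A(z)` are scalar multiples of those about `M(z)`.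
-/

section SpectralProj

variable {K A : Type*} [Field K] [Ring A] [Algebra K A]

noncomputable def spectralProj (y : K) (N : A) : A :=
  (2 : K)⁻¹ • (1 : A) + (2 * y)⁻¹ • N

variable {y : K} {N : A}

theorem commute_spectralProj (y : K) (N : A) : Commute N (spectralProj y N) :=
  ((Commute.one_right N).smul_right _).add_right ((Commute.refl N).smul_right _)

theorem mul_spectralProj (hN : N * N = y ^ 2 • (1 : A)) (hy : y ≠ 0) :
    N * spectralProj y N = y • spectralProj y N := by
  simp only [spectralProj, mul_add, mul_smul_comm, mul_one, hN, smul_smul, smul_add]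
  match_scalars <;> field_simp

theorem spectralProj_mul_self [NeZero (2 : K)] (hN : N * N = y ^ 2 • (1 : A)) (hy : y ≠ 0) :
    spectralProj y N * spectralProj y N = spectralProj y N := by
  calc spectralProj y N * spectralProj y N
      = (2 : K)⁻¹ • spectralProj y N + (2 * y)⁻¹ • (N * spectralProj y N) := by
        rw [spectralProj, add_mul, smul_mul_assoc, one_mul, smul_mul_assoc, ← spectralProj]
    _ = spectralProj y N := by
        have half_add_half : (2 : K)⁻¹ + (2 * y)⁻¹ * y = 1 := by field_simp; norm_num
        rw [mul_spectralProj hN hy, smul_smul, ← add_smul, half_add_half, one_smul]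

theorem smul_one_add_mul_spectralProj (c : K) (hN : N * N = y ^ 2 • (1 : A)) (hy : y ≠ 0) :
    (c • (1 : A) + N) * spectralProj y N = (c + y) • spectralProj y N := by
  rw [add_mul, mul_spectralProj hN hy, smul_mul_assoc, one_mul, add_smul]

theorem spectralProj_mul_smul_one_add (c : K) (hN : N * N = y ^ 2 • (1 : A)) (hy : y ≠ 0) :
    spectralProj y N * (c • (1 : A) + N) = (c + y) • spectralProj y N := by
  rw [← smul_one_add_mul_spectralProj c hN hy]
  exact (((Commute.one_left _).smul_left c).add_left (commute_spectralProj y N)).symm.eq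

theorem smul_one_add_mul_one_sub_spectralProj [NeZero (2 : K)] (c : K)
    (hN : N * N = y ^ 2 • (1 : A)) (hy : y ≠ 0) :
    (c • (1 : A) + N) * (1 - spectralProj y N) = (c - y) • (1 - spectralProj y N) := by
  rw [mul_sub, mul_one, smul_one_add_mul_spectralProj c hN hy, spectralProj]
  match_scalars <;> field_simp <;> ring

end SpectralProj

noncomputable def symbN (α β : ℝ) (z : ℂ) : Matrix (Fin 2) (Fin 2) ℂ :=
  !![((α : ℂ) - (β : ℂ)) * z, (α : ℂ) * (z + 1);
     (β : ℂ) * z * (z + 1), -(((α : ℂ) - (β : ℂ)) * z)]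

theorem projF_eq_spectralProj (α β : ℝ) (z y : ℂ) :
    projF α β z y = spectralProj y (symbN α β z) := rfl

theorem symbM_eq_smul_one_add_symbN (α β : ℝ) (z : ℂ) :
    symbM α β z = (((α : ℂ) + (β : ℂ)) * z) • (1 : Matrix (Fin 2) (Fin 2) ℂ) + symbN α β z := by
  ext i j
  fin_cases i <;> fin_cases j <;> simp [symbM, symbN] <;> ring

theorem symbN_mul_self {α β : ℝ} (hαβ : α * β = 1) (z : ℂ) :
    symbN α β z * symbN α β z =
      (z * (z + (α : ℂ) ^ 2) * (z + (β : ℂ) ^ 2)) • (1 : Matrix (Fin 2) (Fin 2) ℂ) := by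
  have hab : (α : ℂ) * β = 1 := by exact_mod_cast hαβ
  ext i j
  fin_cases i <;> fin_cases j <;> simp [symbN, Matrix.mul_apply] <;>
    first | ring1 | linear_combination (z ^ 3 - α * β * z) * hab

theorem projF_idempotent_and_eigenrelations_general (α β : ℝ)
    (hαβ : α * β = 1) (z y : ℂ)
    (hy : y ^ 2 = z * (z + (α : ℂ) ^ 2) * (z + (β : ℂ) ^ 2)) (hy0 : y ≠ 0) :
    (projF α β z y * projF α β z y = projF α β z y) ∧
    (symbM α β z * projF α β z y = (((α : ℂ) + (β : ℂ)) * z + y) • projF α β z y ∧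
      projF α β z y * symbM α β z = (((α : ℂ) + (β : ℂ)) * z + y) • projF α β z y ∧
      symbM α β z * (1 - projF α β z y) =
        (((α : ℂ) + (β : ℂ)) * z - y) • (1 - projF α β z y)) ∧
    (z ≠ 1 →
      symbA α β z * projF α β z y =
          ((((α : ℂ) + (β : ℂ)) * z + y) * (z - 1)⁻¹) • projF α β z y ∧
        projF α β z y * symbA α β z =
          ((((α : ℂ) + (β : ℂ)) * z + y) * (z - 1)⁻¹) • projF α β z y ∧
        symbA α β z * (1 - projF α β z y) =
          ((((α : ℂ) + (β : ℂ)) * z - y) * (z - 1)⁻¹) • (1 - projF α β z y)) := by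
  have hN : symbN α β z * symbN α β z = y ^ 2 • (1 : Matrix (Fin 2) (Fin 2) ℂ) := by
    rw [hy, symbN_mul_self hαβ]
  have hMF := smul_one_add_mul_spectralProj (((α : ℂ) + β) * z) hN hy0
  have hFM := spectralProj_mul_smul_one_add (((α : ℂ) + β) * z) hN hy0
  have hMF' := smul_one_add_mul_one_sub_spectralProj (((α : ℂ) + β) * z) hN hy0
  rw [← symbM_eq_smul_one_add_symbN, ← projF_eq_spectralProj] at hMF hFM hMF'
  refine ⟨spectralProj_mul_self hN hy0, ⟨hMF, hFM, hMF'⟩, fun _ => ⟨?_, ?_, ?_⟩⟩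
  · rw [symbA, smul_mul_assoc, hMF, smul_smul, mul_comm]
  · rw [symbA, mul_smul_comm, hFM, smul_smul, mul_comm]
  · rw [symbA, smul_mul_assoc, hMF', smul_smul, mul_comm]

/-- If `y² = z(z+α²)(z+β²)` and `y ≠ 0`, then `F` is idempotent, commutes with
`M(z)` with `M F = F M = ((α+β)z + y) F` and `M (I-F) = ((α+β)z - y)(I-F)`, and
consequently, for `z ≠ 1`, `A F = F A = ((α+β)z+y)(z-1)⁻¹ F` and
`A (I-F) = ((α+β)z-y)(z-1)⁻¹ (I-F)`. -/
theorem projF_idempotent_and_eigenrelations (α β : ℝ) (hα : 0 < α) (hβ : 0 < β)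
    (hαβ : α * β = 1) (z y : ℂ)
    (hy : y ^ 2 = z * (z + (α : ℂ) ^ 2) * (z + (β : ℂ) ^ 2)) (hy0 : y ≠ 0) :
    (projF α β z y * projF α β z y = projF α β z y) ∧
    (symbM α β z * projF α β z y = (((α : ℂ) + (β : ℂ)) * z + y) • projF α β z y ∧
      projF α β z y * symbM α β z = (((α : ℂ) + (β : ℂ)) * z + y) • projF α β z y ∧
      symbM α β z * (1 - projF α β z y) =
        (((α : ℂ) + (β : ℂ)) * z - y) • (1 - projF α β z y)) ∧
    (z ≠ 1 →
      symbA α β z * projF α β z y =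
          ((((α : ℂ) + (β : ℂ)) * z + y) * (z - 1)⁻¹) • projF α β z y ∧
        projF α β z y * symbA α β z =
          ((((α : ℂ) + (β : ℂ)) * z + y) * (z - 1)⁻¹) • projF α β z y ∧
        symbA α β z * (1 - projF α β z y) =
          ((((α : ℂ) + (β : ℂ)) * z - y) * (z - 1)⁻¹) • (1 - projF α β z y)) :=
  projF_idempotent_and_eigenrelations_general α β hαβ z y hy hy0
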